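/- Let E be a strongly archimedean convex SEA with property A which has the b-comparability property (with respect to its canonical compression base). Then for all a,b∈E, aCb implies a|b. -/

import Mathlib

universe u

/-- An effect algebra: the partially defined sum `⊕` is encoded via `Option`. -/
class EffectAlgebra (E : Type u) where
  oplus : E → E → Option E
  zero : E
  one : E
  oplus_comm : ∀ a b : E, oplus a b = oplus b a
  oplus_assoc : ∀ {a b c ab abc : E}, oplus a b = some ab → oplus ab c = some abc →
    ∃ bc : E, oplus b c = some bc ∧ oplus a bc = some abc
  exists_perp : ∀ a : E, ∃ b : E, oplus a b = some one
  perp_unique : ∀ {a b c : E}, oplus a b = some one → oplus a c = some one → b = c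
  oplus_one : ∀ {a b : E}, oplus a one = some b → a = zero

namespace EffectAlgebra

variable {E : Type u} [EffectAlgebra E]

/-- The orthosupplement `a^⊥`. -/
noncomputable def perp (a : E) : E := Classical.choose (exists_perp a)

/-- The partial order: `a ≤ b` iff `a ⊕ c = b` for some `c`. -/
def le (a b : E) : Prop := ∃ c : E, oplus a c = some b

/-- Sharp elements. -/
def Sharp (a : E) : Prop := ∀ x : E, le x a → le x (perp a) → x = zero

/-- Finite orthosums of lists of elements. -/
def osum : List E → Option E
  | [] => some zero
  | a :: l => (osum l).bind fun s => oplus a s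

/-- Mackey compatibility `a ↔ b`. -/
def MCompat (a b : E) : Prop :=
  ∃ a₁ b₁ c s t : E, oplus a₁ b₁ = some s ∧ oplus s c = some t ∧
    oplus a₁ c = some a ∧ oplus b₁ c = some b

/-- `a` is the supremum of the sequence `f`. -/
def IsSupSeq (f : ℕ → E) (a : E) : Prop :=
  (∀ n, le (f n) a) ∧ ∀ b : E, (∀ n, le (f n) b) → le a b

/-- `a` is the infimum of the sequence `f`. -/
def IsInfSeq (f : ℕ → E) (a : E) : Prop :=
  (∀ n, le a (f n)) ∧ ∀ b : E, (∀ n, le b (f n)) → le b a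

/-- `a` is the infimum of the set `S`. -/
def IsInfSet (S : Set E) (a : E) : Prop :=
  (∀ x ∈ S, le a x) ∧ ∀ b : E, (∀ x ∈ S, le b x) → le b a

/-- `a` is the supremum of `f` computed inside the subset `S`. -/
def IsSupSeqIn (S : Set E) (f : ℕ → E) (a : E) : Prop :=
  a ∈ S ∧ (∀ n, le (f n) a) ∧ ∀ b ∈ S, (∀ n, le (f n) b) → le a b

variable (E) in
/-- Monotone σ-completeness: every ascending sequence has a supremum. -/
def MonotoneSigmaComplete : Prop :=
  ∀ f : ℕ → E, (∀ n, le (f n) (f (n + 1))) → ∃ a : E, IsSupSeq f a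

end EffectAlgebra

open EffectAlgebra in
/-- A compression base `(J_p)_{p ∈ P}` on an effect algebra. -/
structure CompressionBase (E : Type u) [EffectAlgebra E] where
  P : Set E
  J : E → E → E
  zero_mem : zero ∈ P
  one_mem : one ∈ P
  perp_mem : ∀ p ∈ P, perp p ∈ P
  oplus_mem : ∀ p ∈ P, ∀ q ∈ P, ∀ r : E, oplus p q = some r → r ∈ P
  normal : ∀ e f d s t x y : E, oplus e f = some s → oplus s d = some t →
    oplus e d = some x → x ∈ P → oplus f d = some y → y ∈ P → d ∈ P
  additive : ∀ p ∈ P, ∀ a b c : E, oplus a b = some c →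
    oplus (J p a) (J p b) = some (J p c)
  retraction : ∀ p ∈ P, ∀ a : E, le a p → J p a = a
  focus : ∀ p ∈ P, J p one = p
  compression : ∀ p ∈ P, ∀ a : E, (J p a = zero ↔ le a (perp p))
  compose : ∀ p ∈ P, ∀ q ∈ P, ∀ r ∈ P, ∀ s t qr : E,
    oplus p q = some s → oplus s r = some t → oplus q r = some qr →
    ∀ a : E, J s (J qr a) = J q a

namespace CompressionBase

open EffectAlgebra

variable {E : Type u} [EffectAlgebra E] (cb : CompressionBase E)

/-- The commutant `C(p)` of a projection `p`. -/
noncomputable def Cset (p : E) : Set E :=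
  {a : E | oplus (cb.J p a) (cb.J (perp p) a) = some a}

/-- `PC(a)`: projections compatible with `a`. -/
noncomputable def PC (a : E) : Set E := {p : E | p ∈ cb.P ∧ a ∈ cb.Cset p}

/-- The P-bicommutant `P(a) = PC(PC(a) ∪ {a})`. -/
noncomputable def Pbicomm (a : E) : Set E :=
  {p : E | p ∈ cb.P ∧ a ∈ cb.Cset p ∧ ∀ q ∈ cb.PC a, q ∈ cb.Cset p}

/-- `p` is the projection cover of `a`. -/
def IsProjCover (a p : E) : Prop :=
  p ∈ cb.P ∧ ∀ q ∈ cb.P, (le a q ↔ le p q)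

/-- The projection cover property. -/
def ProjCoverProp : Prop := ∀ a : E, ∃ p : E, cb.IsProjCover a p

/-- `B` is a Boolean subalgebra of the set of projections. -/
noncomputable def BooleanSub (B : Set E) : Prop :=
  B ⊆ cb.P ∧ zero ∈ B ∧ one ∈ B ∧ (∀ p ∈ B, perp p ∈ B) ∧
  (∀ p ∈ B, ∀ q ∈ B, MCompat p q) ∧
  (∀ p ∈ B, ∀ q ∈ B, ∀ r : E, oplus p q = some r → r ∈ B)

/-- The b-property. -/
noncomputable def BProperty : Prop :=
  ∀ a : E, ∃ B : Set E, cb.BooleanSub B ∧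
    ∀ p ∈ cb.P, (a ∈ cb.Cset p ↔ ∀ b ∈ B, b ∈ cb.Cset p)

/-- Commutativity `aCb` of b-elements. -/
noncomputable def CommuteC (a b : E) : Prop :=
  ∀ p ∈ cb.Pbicomm a, ∀ q ∈ cb.Pbicomm b, MCompat p q

/-- The b-comparability property. -/
noncomputable def BComparability : Prop :=
  cb.BProperty ∧
  ∀ e f : E, cb.CommuteC e f → ∃ p : E, p ∈ cb.Pbicomm e ∧ p ∈ cb.Pbicomm f ∧
    le (cb.J p e) (cb.J p f) ∧ le (cb.J (perp p) f) (cb.J (perp p) e)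

/-- Spectrality: projection cover property plus b-comparability. -/
noncomputable def Spectral : Prop := cb.ProjCoverProp ∧ cb.BComparability

/-- `p` is the floor of `a` (the largest projection below `a`). -/
def IsFloor (a p : E) : Prop :=
  p ∈ cb.P ∧ le p a ∧ ∀ q ∈ cb.P, le q a → le q p

end CompressionBase

open EffectAlgebra in
/-- A sequential effect algebra (SEA). -/
class SEA (E : Type u) [EffectAlgebra E] where
  seq : E → E → E
  seq_oplus : ∀ a b c d : E, oplus b c = some d →
    oplus (seq a b) (seq a c) = some (seq a d)
  one_seq : ∀ a : E, seq one a = a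
  seq_zero_symm : ∀ a b : E, seq a b = zero → seq b a = zero
  comm_perp : ∀ a b : E, seq a b = seq b a → seq a (perp b) = seq (perp b) a
  comm_assoc : ∀ a b c : E, seq a b = seq b a → seq a (seq b c) = seq (seq a b) c
  comm_seq : ∀ a b c : E, seq c a = seq a c → seq c b = seq b c →
    seq c (seq a b) = seq (seq a b) c
  comm_oplus : ∀ a b c d : E, seq c a = seq a c → seq c b = seq b c →
    oplus a b = some d → seq c d = seq d c

namespace EffectAlgebra

variable {E : Type u} [EffectAlgebra E]

section SEAdefs

variable [SEA E]

/-- `a | b` : the sequential product commutes. -/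
def Commutes (a b : E) : Prop := SEA.seq a b = SEA.seq b a

/-- The commutant `S'` of a subset. -/
def commutant (S : Set E) : Set E := {a : E | ∀ s ∈ S, Commutes a s}

/-- The bicommutant `S''`. -/
def bicommutant (S : Set E) : Set E := commutant (commutant S)

/-- A sub-SEA: a sub-effect algebra closed under the sequential product. -/
noncomputable def SubSEA (S : Set E) : Prop :=
  zero ∈ S ∧ one ∈ S ∧ (∀ a ∈ S, perp a ∈ S) ∧
  (∀ a ∈ S, ∀ b ∈ S, ∀ c : E, oplus a b = some c → c ∈ S) ∧
  (∀ a ∈ S, ∀ b ∈ S, SEA.seq a b ∈ S)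

/-- A commutative sub-SEA. -/
noncomputable def CommSubSEA (S : Set E) : Prop :=
  SubSEA S ∧ ∀ a ∈ S, ∀ b ∈ S, Commutes a b

/-- A maximal commutative sub-SEA. -/
noncomputable def MaxCommSubSEA (S : Set E) : Prop :=
  CommSubSEA S ∧ ∀ T : Set E, CommSubSEA T → S ⊆ T → T = S

/-- `C(p)` for the canonical compression base `J_p = p ∘ ·` of a SEA. -/
noncomputable def sC (p : E) : Set E :=
  {a : E | oplus (SEA.seq p a) (SEA.seq (perp p) a) = some a}

/-- `PC(a)` for the canonical compression base. -/
noncomputable def sPC (a : E) : Set E := {p : E | Sharp p ∧ a ∈ sC p}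

/-- The P-bicommutant `P(a)` for the canonical compression base. -/
noncomputable def sPbicomm (a : E) : Set E :=
  {p : E | Sharp p ∧ a ∈ sC p ∧ ∀ q ∈ sPC a, q ∈ sC p}

/-- `p` is the projection cover of `a` (canonical compression base). -/
noncomputable def sIsProjCover (a p : E) : Prop :=
  Sharp p ∧ ∀ q : E, Sharp q → (le a q ↔ le p q)

variable (E) in
/-- The projection cover property (canonical compression base). -/
noncomputable def sProjCoverProp : Prop := ∀ a : E, ∃ p : E, sIsProjCover a p

/-- `B` is a Boolean subalgebra of the sharp elements. -/
noncomputable def sBooleanSub (B : Set E) : Prop :=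
  (∀ p ∈ B, Sharp p) ∧ zero ∈ B ∧ one ∈ B ∧ (∀ p ∈ B, perp p ∈ B) ∧
  (∀ p ∈ B, ∀ q ∈ B, MCompat p q) ∧
  (∀ p ∈ B, ∀ q ∈ B, ∀ r : E, oplus p q = some r → r ∈ B)

variable (E) in
/-- The b-property (canonical compression base). -/
noncomputable def sBProperty : Prop :=
  ∀ a : E, ∃ B : Set E, sBooleanSub B ∧
    ∀ p : E, Sharp p → (a ∈ sC p ↔ ∀ b ∈ B, b ∈ sC p)

/-- `aCb` (canonical compression base). -/
noncomputable def sCommuteC (a b : E) : Prop :=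
  ∀ p ∈ sPbicomm a, ∀ q ∈ sPbicomm b, MCompat p q

variable (E) in
/-- The b-comparability property (canonical compression base). -/
noncomputable def sBComparability : Prop :=
  sBProperty E ∧
  ∀ e f : E, sCommuteC e f → ∃ p : E, p ∈ sPbicomm e ∧ p ∈ sPbicomm f ∧
    le (SEA.seq p e) (SEA.seq p f) ∧
    le (SEA.seq (perp p) f) (SEA.seq (perp p) e)

variable (E) in
/-- Spectrality of a SEA with respect to its canonical compression base. -/
noncomputable def sSpectral : Prop := sProjCoverProp E ∧ sBComparability E

/-- `p` is the floor of `a` (canonical compression base). -/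
noncomputable def sIsFloor (a p : E) : Prop :=
  Sharp p ∧ le p a ∧ ∀ q : E, Sharp q → le q a → le q p

variable (E) in
/-- Property A. -/
def PropertyA : Prop :=
  ∀ (f : ℕ → E) (a b : E), (∀ n, le (f n) (f (n + 1))) →
    (∀ m n, Commutes (f m) (f n)) → IsSupSeq f a →
    (∀ n, Commutes (f n) b) → Commutes a b

variable (E) in
/-- A σ-SEA. -/
def SigmaSEA : Prop :=
  MonotoneSigmaComplete E ∧
  ∀ (f : ℕ → E) (m : E), (∀ n, le (f (n + 1)) (f n)) → IsInfSeq f m →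
    ∀ b : E, IsInfSeq (fun n => SEA.seq b (f n)) (SEA.seq b m) ∧
      ((∀ n, Commutes b (f n)) → Commutes b m)

/-- Iterated sequential powers: `seqPow a n = a^(n+1)`. -/
def seqPow (a : E) : ℕ → E
  | 0 => a
  | n + 1 => SEA.seq a (seqPow a n)

end SEAdefs

end EffectAlgebra

open EffectAlgebra in
/-- A convex effect algebra: scalar multiplication by reals in `[0,1]`. -/
class ConvexEA (E : Type u) [EffectAlgebra E] where
  smul : ℝ → E → E
  smul_smul : ∀ (l m : ℝ) (a : E), 0 ≤ l → l ≤ 1 → 0 ≤ m → m ≤ 1 →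
    smul m (smul l a) = smul (l * m) a
  smul_add_coeff : ∀ (l m : ℝ) (a : E), 0 ≤ l → 0 ≤ m → l + m ≤ 1 →
    oplus (smul l a) (smul m a) = some (smul (l + m) a)
  smul_oplus : ∀ (l : ℝ) (a b c : E), 0 ≤ l → l ≤ 1 → oplus a b = some c →
    oplus (smul l a) (smul l b) = some (smul l c)
  one_smul : ∀ a : E, smul 1 a = a

namespace EffectAlgebra

variable {E : Type u} [EffectAlgebra E]

section Convexdefs

variable [ConvexEA E]

variable (E) in
/-- Strong archimedeanity. -/
def StronglyArchimedean : Prop :=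
  ∀ a b c : E,
    (∀ n : ℕ, ∃ d : E, oplus b (ConvexEA.smul (1 / (n + 1) : ℝ) c) = some d ∧ le a d) →
    le a b

/-- `DistLE a b ε` encodes `‖a - b‖ ≤ ε` in the order unit norm:
`(1/2)a ≤ (1/2)b ⊕ (ε/2)1` and symmetrically (with `ε` clamped to `[0,1]`). -/
def DistLE (a b : E) (ε : ℝ) : Prop :=
  (∃ d : E, oplus (ConvexEA.smul (2⁻¹ : ℝ) b) (ConvexEA.smul (min ε 1 / 2) one) = some d ∧
    le (ConvexEA.smul (2⁻¹ : ℝ) a) d) ∧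
  (∃ d : E, oplus (ConvexEA.smul (2⁻¹ : ℝ) a) (ConvexEA.smul (min ε 1 / 2) one) = some d ∧
    le (ConvexEA.smul (2⁻¹ : ℝ) b) d)

/-- Norm convergence of a sequence. -/
def NormLimit (f : ℕ → E) (a : E) : Prop :=
  ∀ ε : ℝ, 0 < ε → ∃ N : ℕ, ∀ n ≥ N, DistLE (f n) a ε

/-- Cauchy sequences with respect to the order unit norm. -/
def CauchySeqE (f : ℕ → E) : Prop :=
  ∀ ε : ℝ, 0 < ε → ∃ N : ℕ, ∀ m ≥ N, ∀ n ≥ N, DistLE (f m) (f n) ε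

variable (E) in
/-- Norm completeness. -/
def NormComplete : Prop := ∀ f : ℕ → E, CauchySeqE f → ∃ a : E, NormLimit f a

/-- A norm-closed subset. -/
def NormClosedSet (S : Set E) : Prop :=
  ∀ (f : ℕ → E) (a : E), (∀ n, f n ∈ S) → NormLimit f a → a ∈ S

/-- A norm-complete subset. -/
def NormCompleteSet (S : Set E) : Prop :=
  ∀ f : ℕ → E, (∀ n, f n ∈ S) → CauchySeqE f → ∃ a ∈ S, NormLimit f a

/-- One-dimensional elements. -/
def OneDim (a : E) : Prop :=
  ∀ b : E, le b a → ∃ t : ℝ, 0 ≤ t ∧ t ≤ 1 ∧ b = ConvexEA.smul t a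

/-- `l` is a representation of `a` as a simple element:
`a = ⊕ μ_i p_i` with `μ_i ∈ [0,1]`, `p_i` sharp and `⊕ p_i = 1`. -/
noncomputable def SimpleRep (a : E) (l : List (ℝ × E)) : Prop :=
  (∀ x ∈ l, x.1 ∈ Set.Icc (0 : ℝ) 1 ∧ Sharp x.2) ∧
  osum (l.map Prod.snd) = some one ∧
  osum (l.map fun x => ConvexEA.smul x.1 x.2) = some a

/-- Simple elements. -/
noncomputable def SimpleElem (a : E) : Prop := ∃ l : List (ℝ × E), SimpleRep a l

/-- A reduced representation: strictly increasing coefficients, nonzero sharp elements. -/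
noncomputable def ReducedRep (a : E) (l : List (ℝ × E)) : Prop :=
  SimpleRep a l ∧ (l.map Prod.fst).Chain' (· < ·) ∧ ∀ x ∈ l, x.2 ≠ zero

end Convexdefs

section SpecRes

variable [SEA E] [ConvexEA E]

/-- `p` is the spectral resolution of `a` (canonical compression base): a family of
projections in the bicommutant of `a`, nondecreasing and right continuous on `[0,1]`,
with `J_{p_λ}(a) ≤ λ p_λ` and `λ p_λ^⊥ ≤ J_{p_λ^⊥}(a)`. -/
noncomputable def sIsSpecRes (a : E) (p : ℝ → E) : Prop :=
  (∀ l : ℝ, 0 ≤ l → l ≤ 1 → p l ∈ sPbicomm a) ∧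
  (∀ l m : ℝ, 0 ≤ l → l ≤ m → m ≤ 1 → le (p l) (p m)) ∧
  (∀ l : ℝ, 0 ≤ l → l < 1 →
    IsInfSet {x : E | ∃ m : ℝ, l < m ∧ m ≤ 1 ∧ x = p m} (p l)) ∧
  (∀ l : ℝ, 0 ≤ l → l ≤ 1 →
    le (SEA.seq (p l) a) (ConvexEA.smul l (p l)) ∧
    le (ConvexEA.smul l (perp (p l))) (SEA.seq (perp (p l)) a))

end SpecRes

end EffectAlgebra

namespace CompressionBase

open EffectAlgebra

variable {E : Type u} [EffectAlgebra E] [ConvexEA E] (cb : CompressionBase E)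

/-- `p` is the spectral resolution of `a` with respect to the compression base `cb`. -/
noncomputable def IsSpecRes (a : E) (p : ℝ → E) : Prop :=
  (∀ l : ℝ, 0 ≤ l → l ≤ 1 → p l ∈ cb.Pbicomm a) ∧
  (∀ l m : ℝ, 0 ≤ l → l ≤ m → m ≤ 1 → le (p l) (p m)) ∧
  (∀ l : ℝ, 0 ≤ l → l < 1 →
    IsInfSet {x : E | ∃ m : ℝ, l < m ∧ m ≤ 1 ∧ x = p m} (p l)) ∧
  (∀ l : ℝ, 0 ≤ l → l ≤ 1 →
    le (cb.J (p l) a) (ConvexEA.smul l (p l)) ∧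
    le (ConvexEA.smul l (perp (p l))) (cb.J (perp (p l)) a))

end CompressionBase


/-!
b-comparability lets one refine discretised spectral resolutions of `a`. Suppose `(dₖ)` is a
partition of unity into `2ⁿ` sharp elements of the bicommutant `P(a)''` on whose `k`-th piece `a`
lies between `k/2ⁿ` and `(k+1)/2ⁿ`. The midpoint element `Y = ⊕ₖ (2k+1)/2ⁿ⁺¹ dₖ` satisfies `aCY`,
so comparability provides `v ∈ P(a)` with `v ∘ a ≤ v ∘ Y` and `v⊥ ∘ Y ≤ v⊥ ∘ a`, and the pieces
`dₖ ∘ v`, `dₖ ∘ v⊥` form a partition of mesh `2⁻⁽ⁿ⁺¹⁾`. The lower sums `⊕ₖ k/2ⁿ dₖ` increase,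
and they are within `2⁻ⁿ` of `a`, so by strong archimedeanity their supremum is `a`.

If `aCb`, then `P(a)` and `P(b)` commute elementwise, hence so do `P(a)''` and `P(b)''`, and
dyadic combinations of their sharp elements commute. Property A applied to the lower sums of `b`
shows that every lower sum of `a` commutes with `b`, and applied again to those of `a` it gives
`a | b`.
-/

namespace EffectAlgebra

open ConvexEA

variable {E : Type u} [EffectAlgebra E]

lemma oplus_perp (a : E) : oplus a (perp a) = some one := Classical.choose_spec (exists_perp a)

lemma perp_eq_of_oplus_eq_one {a b : E} (h : oplus a b = some one) : perp a = b :=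
  perp_unique (oplus_perp a) h

lemma perp_perp (a : E) : perp (perp a) = a :=
  perp_eq_of_oplus_eq_one (oplus_comm (perp a) a ▸ oplus_perp a)

lemma one_oplus_zero : oplus (one : E) zero = some one := by
  obtain ⟨b, hb⟩ := exists_perp (one : E)
  obtain rfl : b = zero := oplus_one (oplus_comm one b ▸ hb)
  exact hb

lemma oplus_zero (a : E) : oplus a zero = some a := by
  obtain ⟨bc, hbc, habc⟩ := oplus_assoc (oplus_perp (perp a)) one_oplus_zero
  rwa [← perp_unique (oplus_perp (perp a)) habc, perp_perp] at hbc

lemma zero_oplus (a : E) : oplus zero a = some a := oplus_comm a zero ▸ oplus_zero a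

lemma perp_one : perp (one : E) = zero := perp_eq_of_oplus_eq_one one_oplus_zero

lemma perp_zero : perp (zero : E) = one := by
  rw [← perp_one, perp_perp]

lemma oplus_assoc' {a b c bc abc : E} (h1 : oplus b c = some bc) (h2 : oplus a bc = some abc) :
    ∃ ab : E, oplus a b = some ab ∧ oplus ab c = some abc := by
  obtain ⟨u, hu, hcu⟩ := oplus_assoc (oplus_comm b c ▸ h1) (oplus_comm a bc ▸ h2)
  exact ⟨u, oplus_comm b a ▸ hu, oplus_comm c u ▸ hcu⟩

lemma perp_oplus_eq_perp {a b c : E} (h : oplus a b = some c) :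
    oplus (perp c) a = some (perp b) := by
  obtain ⟨u, hu, hau⟩ := oplus_assoc h (oplus_perp c)
  obtain rfl : perp a = u := perp_unique (oplus_perp a) hau
  obtain ⟨v, hv, hbv⟩ := oplus_assoc hu (oplus_comm a (perp a) ▸ oplus_perp a)
  rwa [← perp_unique (oplus_perp b) hbv] at hv

lemma oplus_left_cancel {a b c d : E} (h1 : oplus a b = some d) (h2 : oplus a c = some d) :
    b = c := by
  have h := perp_oplus_eq_perp h1
  rw [perp_oplus_eq_perp h2, Option.some.injEq] at h
  rw [← perp_perp b, ← h, perp_perp]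

lemma le.refl (a : E) : le a a := ⟨zero, oplus_zero a⟩

lemma zero_le' (a : E) : le zero a := ⟨a, zero_oplus a⟩

lemma le_one (a : E) : le a one := ⟨perp a, oplus_perp a⟩

lemma le.trans {a b c : E} (h1 : le a b) (h2 : le b c) : le a c := by
  obtain ⟨x, hx⟩ := h1
  obtain ⟨y, hy⟩ := h2
  obtain ⟨u, -, hu⟩ := oplus_assoc hx hy
  exact ⟨u, hu⟩

lemma eq_zero_of_le_zero {a : E} (h : le a zero) : a = zero := by
  obtain ⟨c, hc⟩ := h
  obtain ⟨bc, hbc, -⟩ := oplus_assoc hc (zero_oplus one)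
  obtain rfl : c = zero := oplus_one hbc
  rw [oplus_zero] at hc
  exact Option.some.inj hc

lemma le_of_oplus {a b s : E} (h : oplus a b = some s) : le a s := ⟨b, h⟩

lemma le_of_oplus_right {a b s : E} (h : oplus a b = some s) : le b s :=
  ⟨a, oplus_comm a b ▸ h⟩

lemma le_perp_of_oplus {a b c : E} (h : oplus a b = some c) : le b (perp a) := by
  obtain ⟨u, hu, hau⟩ := oplus_assoc h (oplus_perp c)
  rw [perp_unique (oplus_perp a) hau]
  exact ⟨perp c, hu⟩

lemma le_perp_of_oplus' {a b c : E} (h : oplus a b = some c) : le a (perp b) :=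
  le_perp_of_oplus (oplus_comm a b ▸ h)

lemma exists_oplus_of_le_perp {a b : E} (h : le a (perp b)) : ∃ c, oplus a b = some c := by
  obtain ⟨w, hw⟩ := h
  obtain ⟨u, hu, -⟩ := oplus_assoc (oplus_comm a w ▸ hw) (oplus_comm b (perp b) ▸ oplus_perp b)
  exact ⟨u, hu⟩

lemma perp_le_perp {a b : E} (h : le a b) : le (perp b) (perp a) := by
  obtain ⟨c, hc⟩ := h
  obtain ⟨u, hu, hau⟩ := oplus_assoc hc (oplus_perp b)
  rw [perp_unique (oplus_perp a) hau]
  exact ⟨c, oplus_comm c (perp b) ▸ hu⟩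

lemma oplus_oplus_comm {a b c d ab cd s : E} (h1 : oplus a b = some ab)
    (h2 : oplus c d = some cd) (h3 : oplus ab cd = some s) :
    ∃ ac bd : E, oplus a c = some ac ∧ oplus b d = some bd ∧ oplus ac bd = some s := by
  obtain ⟨u, hu, hau⟩ := oplus_assoc h1 h3
  obtain ⟨bc, hbc, hbcd⟩ := oplus_assoc' h2 hu
  obtain ⟨bd, hbd, hcbd⟩ := oplus_assoc (oplus_comm b c ▸ hbc) hbcd
  obtain ⟨ac, hac, hacbd⟩ := oplus_assoc' hcbd hau
  exact ⟨ac, bd, hac, hbd, hacbd⟩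

lemma exists_oplus_le_oplus {a a' b b' s' : E} (ha : le a a') (hb : le b b')
    (h : oplus a' b' = some s') : ∃ s : E, oplus a b = some s ∧ le s s' := by
  obtain ⟨x, hx⟩ := ha
  obtain ⟨y, hy⟩ := hb
  obtain ⟨ab, xy, hab, -, htot⟩ := oplus_oplus_comm hx hy h
  exact ⟨ab, hab, ⟨xy, htot⟩⟩

lemma oplus_le_oplus {a a' b b' s s' : E} (ha : le a a') (hb : le b b')
    (h : oplus a b = some s) (h' : oplus a' b' = some s') : le s s' := by
  obtain ⟨t, ht, hts⟩ := exists_oplus_le_oplus ha hb h'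
  rwa [Option.some.inj (h.symm.trans ht)]

lemma le_of_oplus_le_oplus {a b b' s s' : E} (h : oplus a b = some s)
    (h' : oplus a b' = some s') (hs : le s s') : le b b' := by
  obtain ⟨w, hw⟩ := hs
  obtain ⟨u, hu, hau⟩ := oplus_assoc h hw
  rw [oplus_left_cancel h' hau]
  exact ⟨w, hu⟩

lemma sharp_one : Sharp (one : E) := fun x _ h => by
  rw [perp_one] at h
  exact eq_zero_of_le_zero h

lemma sharp_perp {p : E} (hp : Sharp p) : Sharp (perp p) := fun x h1 h2 => by
  rw [perp_perp] at h2
  exact hp x h2 h1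

def psum (f : ℕ → E) : ℕ → Option E
  | 0 => some zero
  | n + 1 => (psum f n).bind fun s => oplus s (f n)

@[simp] lemma psum_zero (f : ℕ → E) : psum f 0 = some zero := rfl

lemma psum_succ_of_eq {f : ℕ → E} {n : ℕ} {S : E} (h : psum f n = some S) :
    psum f (n + 1) = oplus S (f n) := by
  simp only [psum, h, Option.bind_some]

lemma exists_of_psum_succ {f : ℕ → E} {n : ℕ} {S : E} (h : psum f (n + 1) = some S) :
    ∃ T, psum f n = some T ∧ oplus T (f n) = some S := by
  cases hT : psum f n with
  | none => simp [psum, hT] at h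
  | some T => exact ⟨T, rfl, by rwa [psum_succ_of_eq hT] at h⟩

lemma psum_congr {f g : ℕ → E} {n : ℕ} (h : ∀ k < n, f k = g k) : psum f n = psum g n := by
  induction n with
  | zero => rfl
  | succ m ih => simp only [psum, ih fun k hk => h k (by omega), h m (by omega)]

lemma exists_psum_le_of_le {f : ℕ → E} {n : ℕ} {S : E} (h : psum f n = some S) {m : ℕ}
    (hm : m ≤ n) : ∃ T, psum f m = some T ∧ le T S := by
  induction n generalizing S with
  | zero =>
    obtain rfl : m = 0 := by omega
    exact ⟨S, h, le.refl S⟩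
  | succ k ih =>
    obtain ⟨T, hT, hTS⟩ := exists_of_psum_succ h
    rcases Nat.lt_or_ge m (k + 1) with hlt | hge
    · obtain ⟨T', hT', hle⟩ := ih hT (by omega)
      exact ⟨T', hT', hle.trans (le_of_oplus hTS)⟩
    · obtain rfl : m = k + 1 := by omega
      exact ⟨S, h, le.refl S⟩

lemma le_psum {f : ℕ → E} {n : ℕ} {S : E} (h : psum f n = some S) {k : ℕ} (hk : k < n) :
    le (f k) S := by
  obtain ⟨T, hT, hTS⟩ := exists_psum_le_of_le h hk
  obtain ⟨_, _, hadd⟩ := exists_of_psum_succ hT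
  exact (le_of_oplus_right hadd).trans hTS

lemma le_perp_of_psum {f : ℕ → E} {n : ℕ} {S : E} (h : psum f n = some S) {i j : ℕ}
    (hi : i < n) (hj : j < n) (hij : i ≠ j) : le (f i) (perp (f j)) := by
  have key : ∀ i j, i < j → j < n → le (f i) (perp (f j)) := fun i j hij hjn => by
    obtain ⟨T, hT, -⟩ := exists_psum_le_of_le h hjn
    obtain ⟨T', hT', hadd⟩ := exists_of_psum_succ hT
    exact (le_psum hT' hij).trans (le_perp_of_oplus' hadd)
  rcases Nat.lt_or_gt_of_ne hij with hlt | hgt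
  · exact key i j hlt hj
  · simpa only [perp_perp] using perp_le_perp (key j i hgt hi)

lemma exists_psum_le_psum {f g : ℕ → E} {n : ℕ} {S : E} (h : psum f n = some S)
    (hle : ∀ k < n, le (g k) (f k)) : ∃ T, psum g n = some T ∧ le T S := by
  induction n generalizing S with
  | zero => exact ⟨S, h, le.refl S⟩
  | succ m ih =>
    obtain ⟨F, hF, hadd⟩ := exists_of_psum_succ h
    obtain ⟨T, hT, hTF⟩ := ih hF fun k hk => hle k (by omega)
    obtain ⟨s, hs, hss⟩ := exists_oplus_le_oplus hTF (hle m (by omega)) hadd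
    exact ⟨s, by rw [psum_succ_of_eq hT, hs], hss⟩

lemma exists_psum_oplus_psum {f x y : ℕ → E} {n : ℕ} {S : E} (h : psum f n = some S)
    (hsplit : ∀ k < n, oplus (x k) (y k) = some (f k)) :
    ∃ X Y, psum x n = some X ∧ psum y n = some Y ∧ oplus X Y = some S := by
  induction n generalizing S with
  | zero => exact ⟨zero, zero, rfl, rfl, by rw [oplus_zero]; exact h⟩
  | succ m ih =>
    obtain ⟨F, hF, hadd⟩ := exists_of_psum_succ h
    obtain ⟨X, Y, hX, hY, hXY⟩ := ih hF fun k hk => hsplit k (by omega)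
    obtain ⟨X', Y', hX', hY', htot⟩ := oplus_oplus_comm hXY (hsplit m (by omega)) hadd
    exact ⟨X', Y', by rw [psum_succ_of_eq hX, hX'], by rw [psum_succ_of_eq hY, hY'], htot⟩

lemma psum_two_mul {f g : ℕ → E} {n : ℕ} {S : E} (h : psum g n = some S)
    (hpair : ∀ k < n, oplus (f (2 * k)) (f (2 * k + 1)) = some (g k)) :
    psum f (2 * n) = some S := by
  induction n generalizing S with
  | zero => exact h
  | succ m ih =>
    obtain ⟨G, hG, hadd⟩ := exists_of_psum_succ h
    obtain ⟨u, hu, hGu⟩ := oplus_assoc' (hpair m (by omega)) hadd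
    have hodd : psum f (2 * m + 1) = some u := by
      rw [psum_succ_of_eq (ih hG fun k hk => hpair k (by omega)), hu]
    rw [show 2 * (m + 1) = 2 * m + 1 + 1 by ring, psum_succ_of_eq hodd, hGu]

lemma exists_psum_of_psum_two_mul {f : ℕ → E} {n : ℕ} {S : E} (h : psum f (2 * n) = some S) :
    ∃ g : ℕ → E, (∀ k < n, oplus (f (2 * k)) (f (2 * k + 1)) = some (g k)) ∧
      psum g n = some S := by
  induction n generalizing S with
  | zero => exact ⟨fun _ => zero, fun k hk => absurd hk (Nat.not_lt_zero k), h⟩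
  | succ m ih =>
    rw [show 2 * (m + 1) = 2 * m + 1 + 1 by ring] at h
    obtain ⟨T, hT, hTS⟩ := exists_of_psum_succ h
    obtain ⟨U, hU, hUT⟩ := exists_of_psum_succ hT
    obtain ⟨g, hg, hgU⟩ := ih hU
    obtain ⟨x, hx, hUx⟩ := oplus_assoc hUT hTS
    refine ⟨fun k => if k < m then g k else x, fun k hk => ?_, ?_⟩
    · rcases Nat.lt_or_ge k m with hkm | hkm
      · simpa only [if_pos hkm] using hg k hkm
      · obtain rfl : k = m := by omega
        simpa only [lt_irrefl, if_false] using hx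
    · have hgU' : psum (fun k => if k < m then g k else x) m = some U := by
        rw [psum_congr fun k hk => if_pos hk]
        exact hgU
      rw [psum_succ_of_eq hgU', if_neg (lt_irrefl m), hUx]

lemma psum_eq_of_eq_zero {g : ℕ → E} {n : ℕ} {G : E} (h : psum g n = some G) {k : ℕ}
    (hk : k < n) (hz : ∀ j < n, j ≠ k → g j = zero) : G = g k := by
  have hzero : ∀ m T, m ≤ k → psum g m = some T → T = zero := by
    intro m
    induction m with
    | zero => exact fun _ _ hT => (Option.some.inj hT).symm
    | succ i ih =>
      intro T hi hT
      obtain ⟨T', hT', hadd⟩ := exists_of_psum_succ hT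
      rw [ih T' (by omega) hT', hz i (by omega) (by omega), oplus_zero] at hadd
      exact (Option.some.inj hadd).symm
  induction n generalizing G with
  | zero => omega
  | succ m ih =>
    obtain ⟨T, hT, hadd⟩ := exists_of_psum_succ h
    rcases Nat.lt_or_ge k m with hlt | hge
    · rw [ih hT hlt fun j hj hjk => hz j (by omega) hjk, hz m (by omega) (by omega),
        oplus_zero] at hadd
      exact (Option.some.inj hadd).symm
    · obtain rfl : k = m := by omega
      rw [hzero _ _ le_rfl hT, zero_oplus] at hadd
      exact (Option.some.inj hadd).symm

section Convex

variable [ConvexEA E]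

lemma smul_zero' {l : ℝ} (h0 : 0 ≤ l) (h1 : l ≤ 1) : smul l (zero : E) = zero :=
  oplus_left_cancel (smul_oplus l zero zero zero h0 h1 (zero_oplus zero)) (oplus_zero _)

lemma zero_smul' (a : E) : smul 0 a = zero := by
  have h := smul_add_coeff 0 0 a le_rfl le_rfl (by norm_num)
  rw [add_zero] at h
  exact oplus_left_cancel h (oplus_zero _)

lemma smul_le_smul_of_le {a b : E} {l : ℝ} (h0 : 0 ≤ l) (h1 : l ≤ 1) (hab : le a b) :
    le (smul l a) (smul l b) := by
  obtain ⟨c, hc⟩ := hab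
  exact ⟨smul l c, smul_oplus l a c b h0 h1 hc⟩

lemma smul_le_smul_of_le_coeff {a : E} {l m : ℝ} (h0 : 0 ≤ l) (hlm : l ≤ m) (h1 : m ≤ 1) :
    le (smul l a) (smul m a) := by
  have h := smul_add_coeff l (m - l) a h0 (by linarith) (by linarith)
  rw [add_sub_cancel] at h
  exact ⟨smul (m - l) a, h⟩

lemma smul_le_self {a : E} {l : ℝ} (h0 : 0 ≤ l) (h1 : l ≤ 1) : le (smul l a) a := by
  simpa only [ConvexEA.one_smul] using smul_le_smul_of_le_coeff (a := a) h0 h1 le_rfl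

lemma oplus_half_half (a : E) : oplus (smul (1 / 2) a) (smul (1 / 2) a) = some a := by
  have h := smul_add_coeff (1 / 2 : ℝ) (1 / 2) a (by norm_num) (by norm_num) (by norm_num)
  rwa [add_halves, ConvexEA.one_smul] at h

lemma eq_half_of_oplus_self {x s : E} (h : oplus x x = some s) : x = smul (1 / 2) s := by
  have h2 := oplus_half_half x
  rw [smul_oplus (1 / 2) x x s (by norm_num) (by norm_num) h] at h2
  exact (Option.some.inj h2).symm

lemma le_of_half_le_half {a u : E} (h : le (smul (1 / 2) a) (smul (1 / 2) u)) : le a u := by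
  obtain ⟨w, hw⟩ := h
  obtain ⟨ac, bd, hac, -, htot⟩ := oplus_oplus_comm hw hw (oplus_half_half u)
  rw [← Option.some.inj ((oplus_half_half a).symm.trans hac)] at htot
  exact ⟨bd, htot⟩

lemma exists_oplus_half_half (x y : E) :
    ∃ t, oplus (smul (1 / 2) x) (smul (1 / 2) y) = some t := by
  have hle : ∀ z : E, le (smul (1 / 2) z) (smul (1 / 2) one) := fun z =>
    smul_le_smul_of_le (by norm_num) (by norm_num) (le_one z)
  obtain ⟨t, ht, -⟩ := exists_oplus_le_oplus (hle x) (hle y) (oplus_half_half one)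
  exact ⟨t, ht⟩

lemma exists_oplus_smul_sub {x y : E} {l m : ℝ} (h0 : 0 ≤ l) (hlm : l ≤ m) (h1 : m ≤ 1)
    (hl : le (smul l x) y) (hm : le y (smul m x)) :
    ∃ ρ, oplus (smul l x) ρ = some y ∧ le ρ (smul (m - l) x) := by
  obtain ⟨ρ, hρ⟩ := hl
  have hsum := smul_add_coeff l (m - l) x h0 (by linarith) (by linarith)
  rw [add_sub_cancel] at hsum
  exact ⟨ρ, hρ, le_of_oplus_le_oplus hρ hsum hm⟩

lemma psum_smul {f : ℕ → E} {n : ℕ} {S : E} {l : ℝ} (h0 : 0 ≤ l) (h1 : l ≤ 1)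
    (h : psum f n = some S) : psum (fun k => smul l (f k)) n = some (smul l S) := by
  induction n generalizing S with
  | zero => rw [psum_zero] at h ⊢; rw [← Option.some.inj h, smul_zero' h0 h1]
  | succ m ih =>
    obtain ⟨T, hT, hadd⟩ := exists_of_psum_succ h
    rw [psum_succ_of_eq (ih hT)]
    exact smul_oplus l T (f m) S h0 h1 hadd

end Convex

section Sequential

variable [SEA E]

lemma seq_zero (a : E) : SEA.seq a zero = zero :=
  oplus_left_cancel (SEA.seq_oplus a zero zero zero (zero_oplus zero)) (oplus_zero _)

lemma zero_seq (a : E) : SEA.seq zero a = zero :=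
  SEA.seq_zero_symm a zero (seq_zero a)

lemma commutes_zero (a : E) : Commutes a zero := by
  rw [Commutes, seq_zero, zero_seq]

lemma seq_one (a : E) : SEA.seq a one = a := by
  rw [← perp_zero, SEA.comm_perp a zero (commutes_zero a), perp_zero, SEA.one_seq]

lemma oplus_seq_seq_perp (a b : E) :
    oplus (SEA.seq a b) (SEA.seq a (perp b)) = some a := by
  simpa only [seq_one] using SEA.seq_oplus a b (perp b) one (oplus_perp b)

lemma seq_le_left (a b : E) : le (SEA.seq a b) a := le_of_oplus (oplus_seq_seq_perp a b)

lemma seq_mono_right {b c : E} (a : E) (h : le b c) : le (SEA.seq a b) (SEA.seq a c) := by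
  obtain ⟨w, hw⟩ := h
  exact le_of_oplus (SEA.seq_oplus a b w c hw)

lemma commutes_perp {a b : E} (h : Commutes a b) : Commutes a (perp b) :=
  SEA.comm_perp a b h

lemma commutes_perp_left {a b : E} (h : Commutes a b) : Commutes (perp a) b :=
  (SEA.comm_perp b a h.symm).symm

lemma commutes_seq {c a b : E} (h1 : Commutes c a) (h2 : Commutes c b) :
    Commutes c (SEA.seq a b) := SEA.comm_seq a b c h1 h2

lemma commutes_oplus {c a b d : E} (h1 : Commutes c a) (h2 : Commutes c b)
    (hd : oplus a b = some d) : Commutes c d := SEA.comm_oplus a b c d h1 h2 hd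

lemma mem_sC_of_commutes {p a : E} (h : Commutes p a) : a ∈ sC p := by
  have hd := oplus_seq_seq_perp a p
  rwa [← h, SEA.comm_perp a p h.symm] at hd

lemma seq_seq_le_seq_seq_of_right {p q x y : E} (hpq : Commutes p q)
    (h : le (SEA.seq q x) (SEA.seq q y)) :
    le (SEA.seq (SEA.seq p q) x) (SEA.seq (SEA.seq p q) y) := by
  rw [← SEA.comm_assoc p q x hpq, ← SEA.comm_assoc p q y hpq]
  exact seq_mono_right p h

lemma seq_seq_le_seq_seq_of_left {p q x y : E} (hpq : Commutes p q)
    (h : le (SEA.seq p x) (SEA.seq p y)) :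
    le (SEA.seq (SEA.seq p q) x) (SEA.seq (SEA.seq p q) y) := by
  rw [hpq]
  exact seq_seq_le_seq_seq_of_right hpq.symm h

lemma psum_commutes {c : E} {f : ℕ → E} {n : ℕ} {S : E}
    (hc : ∀ k < n, Commutes c (f k)) (h : psum f n = some S) : Commutes c S := by
  induction n generalizing S with
  | zero => rw [psum_zero, Option.some.injEq] at h; exact h ▸ commutes_zero c
  | succ m ih =>
    obtain ⟨T, hT, hadd⟩ := exists_of_psum_succ h
    exact commutes_oplus (ih (fun k hk => hc k (by omega)) hT) (hc m (by omega)) hadd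

lemma psum_seq_right {f : ℕ → E} {n : ℕ} {S : E} (c : E) (h : psum f n = some S) :
    psum (fun k => SEA.seq c (f k)) n = some (SEA.seq c S) := by
  induction n generalizing S with
  | zero => rw [psum_zero] at h ⊢; rw [← Option.some.inj h, seq_zero]
  | succ m ih =>
    obtain ⟨T, hT, hadd⟩ := exists_of_psum_succ h
    rw [psum_succ_of_eq (ih hT)]
    exact SEA.seq_oplus c T (f m) S hadd

lemma seq_perp_eq_zero {p : E} (hp : Sharp p) : SEA.seq p (perp p) = zero :=
  hp _ (seq_le_left p (perp p)) (SEA.comm_perp p p rfl ▸ seq_le_left (perp p) p)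

lemma perp_seq_eq_zero {p : E} (hp : Sharp p) : SEA.seq (perp p) p = zero := by
  rw [← SEA.comm_perp p p rfl]
  exact seq_perp_eq_zero hp

lemma seq_self_of_sharp {p : E} (hp : Sharp p) : SEA.seq p p = p := by
  have hd := oplus_seq_seq_perp p p
  rw [seq_perp_eq_zero hp, oplus_zero] at hd
  exact Option.some.inj hd

lemma seq_eq_zero_of_le_perp {p x : E} (hp : Sharp p) (hx : le x (perp p)) :
    SEA.seq p x = zero := by
  have h := seq_mono_right p hx
  rw [seq_perp_eq_zero hp] at h
  exact eq_zero_of_le_zero h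

lemma commutes_of_seq_eq_zero {p x : E} (h : SEA.seq p x = zero) : Commutes p x := by
  rw [Commutes, h, SEA.seq_zero_symm p x h]

lemma commutes_of_le_sharp {p x : E} (hp : Sharp p) (hx : le x p) : Commutes p x := by
  have h : SEA.seq (perp p) x = zero :=
    seq_eq_zero_of_le_perp (sharp_perp hp) (by rwa [perp_perp])
  simpa only [perp_perp] using commutes_perp_left (commutes_of_seq_eq_zero h)

lemma seq_eq_left_of_le_sharp {p x : E} (hp : Sharp p) (hx : le x p) : SEA.seq x p = x := by
  have h := oplus_seq_seq_perp x p
  rw [SEA.seq_zero_symm _ _ (seq_eq_zero_of_le_perp (sharp_perp hp) (by rwa [perp_perp])),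
    oplus_zero] at h
  exact Option.some.inj h

lemma seq_eq_right_of_le_sharp {p x : E} (hp : Sharp p) (hx : le x p) : SEA.seq p x = x := by
  rw [commutes_of_le_sharp hp hx, seq_eq_left_of_le_sharp hp hx]

lemma seq_eq_zero_of_le_of_le_perp {p x y : E} (hp : Sharp p) (hx : le x p)
    (hy : le y (perp p)) : SEA.seq y x = zero := by
  have h := seq_mono_right y hx
  rw [SEA.seq_zero_symm p y (seq_eq_zero_of_le_perp hp hy)] at h
  exact eq_zero_of_le_zero h

lemma commutes_of_mem_sC {p a : E} (hp : Sharp p) (ha : a ∈ sC p) : Commutes p a := by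
  have c1 : Commutes p (SEA.seq p a) := commutes_of_le_sharp hp (seq_le_left p a)
  have c2 : Commutes p (SEA.seq (perp p) a) :=
    commutes_of_seq_eq_zero (seq_eq_zero_of_le_perp hp (seq_le_left (perp p) a))
  exact commutes_oplus c1 c2 ha

lemma sharp_seq {p q : E} (hp : Sharp p) (hq : Sharp q) (hpq : Commutes p q) :
    Sharp (SEA.seq p q) := by
  set r := SEA.seq p q
  have hqr : SEA.seq q r = r := by
    rw [SEA.comm_assoc q p q hpq.symm, ← hpq, ← SEA.comm_assoc p q q hpq, seq_self_of_sharp hq]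
  have hidem : SEA.seq r r = r := by
    rw [← SEA.comm_assoc p q r hpq, hqr, SEA.comm_assoc p p q rfl, seq_self_of_sharp hp]
  have hrr : SEA.seq r (perp r) = zero := by
    have hd := oplus_seq_seq_perp r r
    rw [hidem] at hd
    exact oplus_left_cancel hd (oplus_zero r)
  intro x hxr hxr'
  have hxp : le x p := hxr.trans (seq_le_left p q)
  have hxq : le x q := hxr.trans (by
    rw [show r = SEA.seq q p from hpq]
    exact seq_le_left q p)
  -- `x = q ∘ (p ∘ x) ≤ q ∘ (p ∘ r⊥) = r ∘ r⊥ = 0`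
  have h := seq_mono_right q (seq_mono_right p hxr')
  rw [seq_eq_right_of_le_sharp hp hxp, seq_eq_right_of_le_sharp hq hxq,
    SEA.comm_assoc q p _ hpq.symm, ← hpq, hrr] at h
  exact eq_zero_of_le_zero h

lemma mcompat_of_commutes {p q : E} (h : Commutes p q) : MCompat p q := by
  have h3 : oplus (SEA.seq p (perp q)) (SEA.seq p q) = some p := by
    rw [oplus_comm]
    exact oplus_seq_seq_perp p q
  have h4 : oplus (SEA.seq (perp p) q) (SEA.seq p q) = some q := by
    rw [oplus_comm]
    exact mem_sC_of_commutes h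
  have hle : le (SEA.seq p (perp q)) (perp q) := commutes_perp h ▸ seq_le_left (perp q) p
  obtain ⟨t, ht⟩ := exists_oplus_of_le_perp hle
  obtain ⟨s, hs, hst⟩ := oplus_assoc' h4 ht
  exact ⟨SEA.seq p (perp q), SEA.seq (perp p) q, SEA.seq p q, s, t, hs, hst, h3, h4⟩

lemma commutes_of_mcompat {p q : E} (hp : Sharp p) (h : MCompat p q) : Commutes p q := by
  obtain ⟨a₁, b₁, c, s, t, h1, h2, h3, h4⟩ := h
  obtain ⟨v, hv, hbv⟩ := oplus_assoc (oplus_comm a₁ b₁ ▸ h1) h2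
  rw [Option.some.inj (hv.symm.trans h3)] at hbv
  have hpb : Commutes p b₁ :=
    commutes_of_seq_eq_zero (seq_eq_zero_of_le_perp hp (le_perp_of_oplus' hbv))
  exact commutes_oplus hpb (commutes_of_le_sharp hp (le_of_oplus_right h3)) h4

lemma psum_seq_left {f : ℕ → E} {n : ℕ} {S a : E} (h : psum f n = some S)
    (hsharp : ∀ k < n, Sharp (f k)) (hf : ∀ i < n, ∀ j < n, Commutes (f i) (f j))
    (ha : ∀ k < n, Commutes (f k) a) :
    psum (fun k => SEA.seq (f k) a) n = some (SEA.seq S a) := by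
  induction n generalizing S with
  | zero => rw [psum_zero] at h ⊢; rw [← Option.some.inj h, zero_seq]
  | succ m ih =>
    obtain ⟨T, hT, hadd⟩ := exists_of_psum_succ h
    rw [psum_succ_of_eq (ih hT (fun k hk => hsharp k (by omega))
      (fun i hi j hj => hf i (by omega) j (by omega)) (fun k hk => ha k (by omega)))]
    -- with `c = f m`: `S ∘ a = c ∘ (S ∘ a) ⊕ c⊥ ∘ (S ∘ a) = c ∘ a ⊕ T ∘ a`, since `c ∘ S = c`
    -- and `c⊥ ∘ S = T`
    set c := f m
    have hc : Sharp c := hsharp m (by omega)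
    have hcT : Commutes c T := psum_commutes (fun k hk => hf m (by omega) k (by omega)) hT
    have hcS : Commutes c S := commutes_oplus hcT rfl hadd
    have hTc : le T (perp c) := le_perp_of_oplus' hadd
    have hcS_eq : SEA.seq c S = c := by
      have e := SEA.seq_oplus c T c S hadd
      rwa [seq_eq_zero_of_le_perp hc hTc, seq_self_of_sharp hc, zero_oplus, Option.some.injEq,
        eq_comm] at e
    have hcS_eq' : SEA.seq (perp c) S = T := by
      have e := SEA.seq_oplus (perp c) T c S hadd
      rwa [perp_seq_eq_zero hc, seq_eq_right_of_le_sharp (sharp_perp hc) hTc, oplus_zero,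
        Option.some.injEq, eq_comm] at e
    have hdec : oplus (SEA.seq c (SEA.seq S a)) (SEA.seq (perp c) (SEA.seq S a)) =
        some (SEA.seq S a) := mem_sC_of_commutes (commutes_seq hcS (ha m (by omega)))
    rw [SEA.comm_assoc c S a hcS, hcS_eq,
      SEA.comm_assoc (perp c) S a (commutes_perp_left hcS), hcS_eq'] at hdec
    rw [oplus_comm]
    exact hdec

end Sequential

section Commutant

variable [SEA E]

lemma perp_mem_commutant {S : Set E} {x : E} (hx : x ∈ commutant S) : perp x ∈ commutant S :=
  fun s hs => commutes_perp_left (hx s hs)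

lemma seq_mem_commutant {S : Set E} {x y : E} (hx : x ∈ commutant S) (hy : y ∈ commutant S) :
    SEA.seq x y ∈ commutant S :=
  fun s hs => (commutes_seq (hx s hs).symm (hy s hs).symm).symm

lemma subset_bicommutant (S : Set E) : S ⊆ bicommutant S := fun s hs _ hx => (hx s hs).symm

lemma commutes_of_mem_bicommutant {S T : Set E} (hST : ∀ s ∈ S, ∀ t ∈ T, Commutes s t)
    {x y : E} (hx : x ∈ bicommutant S) (hy : y ∈ bicommutant T) : Commutes x y :=
  (hy x fun t ht => hx t fun s hs => (hST s hs t ht).symm).symm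

lemma commutes_of_mem_sPbicomm {a p : E} (hp : p ∈ sPbicomm a) : Commutes p a :=
  commutes_of_mem_sC hp.1 hp.2.1

lemma sPbicomm_commutes (a : E) : ∀ p ∈ sPbicomm a, ∀ q ∈ sPbicomm a, Commutes p q :=
  fun _ hp q hq => commutes_of_mem_sC hp.1 (hp.2.2 q ⟨hq.1, hq.2.1⟩)

lemma one_mem_sPbicomm (a : E) : (one : E) ∈ sPbicomm a := by
  have h : ∀ x : E, x ∈ sC (one : E) := fun x => by
    show oplus (SEA.seq one x) (SEA.seq (perp one) x) = some x
    rw [SEA.one_seq, perp_one, zero_seq, oplus_zero]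
  exact ⟨sharp_one, h a, fun _ _ => h _⟩

lemma sCommuteC_of_commutes {a y : E} (h : ∀ p ∈ sPbicomm a, Commutes p y) : sCommuteC a y :=
  fun p hp _ hq => mcompat_of_commutes <|
    (commutes_of_mem_sC hq.1 (hq.2.2 p ⟨hp.1, mem_sC_of_commutes (h p hp)⟩)).symm

end Commutant

section Dyadic

variable [ConvexEA E] [SEA E]

/-- Only the additivity of the sequential product is available, so it commutes with
multiplication by dyadic scalars but a priori with no others. -/
def DyadicUnit (l : ℝ) : Prop := ∃ k n : ℕ, k ≤ 2 ^ n ∧ l = k / 2 ^ n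

lemma dyadicUnit_div {k n : ℕ} (h : k ≤ 2 ^ n) : DyadicUnit ((k : ℝ) / 2 ^ n) := ⟨k, n, h, rfl⟩

lemma DyadicUnit.nonneg {l : ℝ} (h : DyadicUnit l) : 0 ≤ l := by
  obtain ⟨k, n, -, rfl⟩ := h
  positivity

lemma DyadicUnit.le_one {l : ℝ} (h : DyadicUnit l) : l ≤ 1 := by
  obtain ⟨k, n, hk, rfl⟩ := h
  rw [div_le_one (by positivity)]
  exact_mod_cast hk

lemma dyadicUnit_mid {k n : ℕ} (hk : k < 2 ^ n) :
    DyadicUnit (((2 * k + 1 : ℕ) : ℝ) / 2 ^ (n + 1)) :=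
  dyadicUnit_div (by rw [pow_succ']; omega)

lemma cast_two_mul_div_two_pow_succ (k n : ℕ) :
    ((2 * k : ℕ) : ℝ) / 2 ^ (n + 1) = (k : ℝ) / 2 ^ n := by
  push_cast
  rw [pow_succ']
  field_simp

lemma cast_two_mul_add_two_div_two_pow_succ (k n : ℕ) :
    ((2 * k + 1 + 1 : ℕ) : ℝ) / 2 ^ (n + 1) = ((k + 1 : ℕ) : ℝ) / 2 ^ n := by
  rw [show 2 * k + 1 + 1 = 2 * (k + 1) by ring, cast_two_mul_div_two_pow_succ]

lemma seq_smul_half (c x : E) : SEA.seq c (smul (1 / 2) x) = smul (1 / 2) (SEA.seq c x) :=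
  eq_half_of_oplus_self (SEA.seq_oplus c _ _ x (oplus_half_half x))

lemma seq_smul_inv_two_pow (c x : E) (n : ℕ) :
    SEA.seq c (smul ((1 / 2) ^ n) x) = smul ((1 / 2) ^ n) (SEA.seq c x) := by
  induction n with
  | zero => simp only [pow_zero, ConvexEA.one_smul]
  | succ m ih =>
    have h0 : (0 : ℝ) ≤ (1 / 2) ^ m := by positivity
    have h1 : ((1 : ℝ) / 2) ^ m ≤ 1 := pow_le_one₀ (by norm_num) (by norm_num)
    rw [pow_succ, ← smul_smul _ _ x h0 h1 (by norm_num) (by norm_num), seq_smul_half, ih,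
      smul_smul _ _ _ h0 h1 (by norm_num) (by norm_num)]

lemma seq_smul_of_dyadicUnit {l : ℝ} (hl : DyadicUnit l) (c x : E) :
    SEA.seq c (smul l x) = smul l (SEA.seq c x) := by
  obtain ⟨k, n, hk, rfl⟩ := hl
  induction k with
  | zero => rw [Nat.cast_zero, zero_div, zero_smul', zero_smul', seq_zero]
  | succ j ih =>
    have hstep : ((j + 1 : ℕ) : ℝ) / 2 ^ n = j / 2 ^ n + (1 / 2) ^ n := by
      rw [div_pow, one_pow]; push_cast; ring
    have hadd : ∀ y : E, oplus (smul ((j : ℝ) / 2 ^ n) y) (smul ((1 / 2) ^ n) y) =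
        some (smul (((j + 1 : ℕ) : ℝ) / 2 ^ n) y) := fun y => by
      rw [hstep]
      exact smul_add_coeff _ _ y (by positivity) (by positivity)
        (hstep ▸ (dyadicUnit_div hk).le_one)
    have h := SEA.seq_oplus c _ _ _ (hadd x)
    rw [ih (by omega), seq_smul_inv_two_pow, hadd] at h
    exact (Option.some.inj h).symm

lemma seq_smul_one {l : ℝ} (hl : DyadicUnit l) (c : E) : SEA.seq c (smul l one) = smul l c := by
  rw [seq_smul_of_dyadicUnit hl, seq_one]

lemma commutes_smul_right {r x : E} {l : ℝ} (hr : Sharp r) (h : Commutes r x)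
    (hl : DyadicUnit l) : Commutes r (smul l x) := by
  refine commutes_of_mem_sC hr ?_
  show oplus (SEA.seq r (smul l x)) (SEA.seq (perp r) (smul l x)) = some (smul l x)
  rw [seq_smul_of_dyadicUnit hl, seq_smul_of_dyadicUnit hl]
  exact smul_oplus l _ _ x hl.nonneg hl.le_one (mem_sC_of_commutes h)

lemma commutes_smul_smul {p q : E} {l m : ℝ} (hp : Sharp p) (hq : Sharp q)
    (hpq : Commutes p q) (hl : DyadicUnit l) (hm : DyadicUnit m) :
    Commutes (smul l p) (smul m q) := by
  have h1 : SEA.seq (smul l p) (smul m q) = smul m (smul l (SEA.seq q p)) := by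
    rw [seq_smul_of_dyadicUnit hm, ← commutes_smul_right hq hpq.symm hl,
      seq_smul_of_dyadicUnit hl]
  have h2 : SEA.seq (smul m q) (smul l p) = smul l (smul m (SEA.seq p q)) := by
    rw [seq_smul_of_dyadicUnit hl, ← commutes_smul_right hp hpq hm,
      seq_smul_of_dyadicUnit hm]
  rw [Commutes, h1, h2, ← hpq, smul_smul _ _ _ hl.nonneg hl.le_one hm.nonneg hm.le_one,
    smul_smul _ _ _ hm.nonneg hm.le_one hl.nonneg hl.le_one, mul_comm]

def IsDyadicCombination (S : Set E) (x : E) : Prop :=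
  ∃ (n : ℕ) (c : ℕ → ℝ) (d : ℕ → E), (∀ k < n, DyadicUnit (c k) ∧ Sharp (d k) ∧ d k ∈ S) ∧
    psum (fun k => smul (c k) (d k)) n = some x

lemma IsDyadicCombination.commutes {S T : Set E} (hST : ∀ s ∈ S, ∀ t ∈ T, Commutes s t)
    {x y : E} (hx : IsDyadicCombination (bicommutant S) x)
    (hy : IsDyadicCombination (bicommutant T) y) : Commutes x y := by
  obtain ⟨n, c, d, hd, hsx⟩ := hx
  obtain ⟨m, c', d', hd', hsy⟩ := hy
  refine (psum_commutes (fun k hk => ?_) hsx).symm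
  refine (psum_commutes (fun j hj => ?_) hsy).symm
  obtain ⟨hck, hdk, hdS⟩ := hd k hk
  obtain ⟨hcj, hdj, hdT⟩ := hd' j hj
  exact commutes_smul_smul hdk hdj (commutes_of_mem_bicommutant hST hdS hdT) hck hcj

end Dyadic

section Archimedean

variable [ConvexEA E]

lemma le_of_forall_le_oplus_smul_inv_two_pow (harch : StronglyArchimedean E) {a b c t : E}
    (ht : oplus b c = some t)
    (h : ∀ n : ℕ, ∃ d, oplus b (smul ((1 / 2) ^ n) c) = some d ∧ le a d) : le a b := by
  refine harch a b c fun m => ?_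
  have hm : (0 : ℝ) < m + 1 := by positivity
  have hle : (1 : ℝ) / (m + 1) ≤ 1 := by rw [div_le_one hm]; linarith [m.cast_nonneg (α := ℝ)]
  have hcoef : ((1 : ℝ) / 2) ^ (m + 1) ≤ 1 / (m + 1) := by
    rw [div_pow, one_pow]
    refine one_div_le_one_div_of_le hm ?_
    exact_mod_cast (Nat.lt_two_pow_self (n := m + 1)).le
  obtain ⟨d', hd', -⟩ := exists_oplus_le_oplus (le.refl b) (smul_le_self (by positivity) hle) ht
  obtain ⟨d, hd, had⟩ := h (m + 1)
  exact ⟨d', hd', had.trans <| oplus_le_oplus (le.refl b)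
    (smul_le_smul_of_le_coeff (by positivity) hcoef hle) hd hd'⟩

lemma isSupSeq_of_approx (harch : StronglyArchimedean E) {a : E} {s : ℕ → E}
    (h : ∀ n, ∃ r, oplus (s n) r = some a ∧ le r (smul ((1 / 2) ^ n) one)) : IsSupSeq s a := by
  refine ⟨fun n => (h n).elim fun r hr => le_of_oplus hr.1, fun u hu => ?_⟩
  -- `u ⊕ ε 1` need not be defined, but `½ u ⊕ ε (½ 1)` is
  apply le_of_half_le_half
  obtain ⟨t, ht⟩ := exists_oplus_half_half u one
  refine le_of_forall_le_oplus_smul_inv_two_pow harch ht fun n => ?_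
  obtain ⟨r, hr, hr_le⟩ := h n
  have h0 : (0 : ℝ) ≤ (1 / 2) ^ n := by positivity
  have h1 : ((1 : ℝ) / 2) ^ n ≤ 1 := pow_le_one₀ (by norm_num) (by norm_num)
  obtain ⟨d, hd, -⟩ := exists_oplus_le_oplus (le.refl _) (smul_le_self h0 h1) ht
  refine ⟨d, hd, oplus_le_oplus (smul_le_smul_of_le (by norm_num) (by norm_num) (hu n)) ?_
    (smul_oplus _ _ _ _ (by norm_num) (by norm_num) hr) hd⟩
  rw [smul_smul _ _ _ (by norm_num) (by norm_num) h0 h1, mul_comm,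
    ← smul_smul _ _ _ h0 h1 (by norm_num) (by norm_num)]
  exact smul_le_smul_of_le (by norm_num) (by norm_num) hr_le

end Archimedean

section SplitBy

variable [SEA E]

noncomputable def splitBy (d : ℕ → E) (v : E) (j : ℕ) : E :=
  SEA.seq (d (j / 2)) (if j % 2 = 0 then v else perp v)

lemma splitBy_two_mul (d : ℕ → E) (v : E) (k : ℕ) : splitBy d v (2 * k) = SEA.seq (d k) v := by
  simp [splitBy]

lemma splitBy_two_mul_add_one (d : ℕ → E) (v : E) (k : ℕ) :
    splitBy d v (2 * k + 1) = SEA.seq (d k) (perp v) := by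
  simp [splitBy, Nat.add_mod, show (2 * k + 1) / 2 = k by omega]

end SplitBy

section Partition

variable [ConvexEA E] [SEA E]

lemma seq_psum_smul_of_le {d : ℕ → E} {c : ℕ → ℝ} {N k : ℕ} {D Y x : E}
    (hD : psum d N = some D) (hsharp : ∀ j < N, Sharp (d j)) (hc : ∀ j < N, DyadicUnit (c j))
    (hY : psum (fun j => smul (c j) (d j)) N = some Y) (hk : k < N) (hx : le x (d k)) :
    SEA.seq x Y = smul (c k) x := by
  have h := psum_eq_of_eq_zero (psum_seq_right x hY) hk fun j hj hjk => by
    rw [seq_smul_of_dyadicUnit (hc j hj), seq_eq_zero_of_le_of_le_perp (hsharp j hj) (le.refl _)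
      (hx.trans (le_perp_of_psum hD hk hj (Ne.symm hjk))), smul_zero' (hc j hj).nonneg
      (hc j hj).le_one]
  rw [h, seq_smul_of_dyadicUnit (hc k hk), seq_eq_left_of_le_sharp (hsharp k hk) hx]

/-- A discretised spectral resolution of `a` of mesh `2⁻ⁿ`. -/
structure IsDyadicPartition (a : E) (n : ℕ) (d : ℕ → E) : Prop where
  sharp : ∀ k < 2 ^ n, Sharp (d k)
  mem_bicommutant : ∀ k < 2 ^ n, d k ∈ bicommutant (sPbicomm a)
  psum_eq_one : psum d (2 ^ n) = some one
  lower : ∀ k : ℕ, k < 2 ^ n → le (smul ((k : ℝ) / 2 ^ n) (d k)) (SEA.seq (d k) a)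
  upper : ∀ k : ℕ, k < 2 ^ n → le (SEA.seq (d k) a) (smul (((k + 1 : ℕ) : ℝ) / 2 ^ n) (d k))

noncomputable def lowerSum (d : ℕ → E) (n : ℕ) : Option E :=
  psum (fun k => smul ((k : ℝ) / 2 ^ n) (d k)) (2 ^ n)

lemma lowerSum_le_lowerSum_splitBy {d : ℕ → E} {n : ℕ} {s s' : E} (v : E)
    (hs : lowerSum d n = some s) (hs' : lowerSum (splitBy d v) (n + 1) = some s') : le s s' := by
  rw [lowerSum, show (2 : ℕ) ^ (n + 1) = 2 * 2 ^ n from pow_succ' 2 n] at hs'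
  obtain ⟨w, hw, hws'⟩ := exists_psum_of_psum_two_mul hs'
  obtain ⟨T, hT, hTs'⟩ := exists_psum_le_psum hws' fun k hk => by
    have hk1 : (k : ℝ) / 2 ^ n ≤ 1 := (dyadicUnit_div hk.le).le_one
    have hcoef : (k : ℝ) / 2 ^ n ≤ ((2 * k + 1 : ℕ) : ℝ) / 2 ^ (n + 1) := by
      rw [← cast_two_mul_div_two_pow_succ]
      gcongr
      omega
    have hsplit := smul_oplus _ _ _ _ (by positivity) hk1 (oplus_seq_seq_perp (d k) v)
    have hwk := hw k hk
    rw [splitBy_two_mul, splitBy_two_mul_add_one, cast_two_mul_div_two_pow_succ] at hwk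
    exact oplus_le_oplus (le.refl _) (smul_le_smul_of_le_coeff (by positivity) hcoef
      (dyadicUnit_div (by omega)).le_one) hsplit hwk
  rw [lowerSum] at hs
  rwa [Option.some.inj (hs.symm.trans hT)]

lemma isDyadicPartition_zero (a : E) :
    IsDyadicPartition a 0 fun _ => one where
  sharp _ _ := sharp_one
  mem_bicommutant _ _ := subset_bicommutant _ (one_mem_sPbicomm a)
  psum_eq_one := zero_oplus one
  lower k hk := by
    obtain rfl : k = 0 := by omega
    simpa only [Nat.cast_zero, zero_div, zero_smul'] using zero_le' _
  upper k hk := by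
    obtain rfl : k = 0 := by omega
    simpa only [zero_add, Nat.cast_one, pow_zero, div_one, ConvexEA.one_smul, SEA.one_seq]
      using le_one a

namespace IsDyadicPartition

variable {a : E} {n : ℕ} {d : ℕ → E} (hd : IsDyadicPartition a n d)
include hd

lemma commutes_of_mem_bicommutant {k : ℕ} (hk : k < 2 ^ n) {w : E}
    (hw : w ∈ bicommutant (sPbicomm a)) : Commutes (d k) w :=
  EffectAlgebra.commutes_of_mem_bicommutant (sPbicomm_commutes a) (hd.mem_bicommutant k hk) hw

lemma commutes_elem {k : ℕ} (hk : k < 2 ^ n) : Commutes (d k) a :=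
  hd.mem_bicommutant k hk a fun _ hp => (commutes_of_mem_sPbicomm hp).symm

lemma exists_lowerSum_oplus :
    ∃ s, lowerSum d n = some s ∧ ∃ r, oplus s r = some a ∧ le r (smul ((1 / 2) ^ n) one) := by
  have ha : psum (fun k => SEA.seq (d k) a) (2 ^ n) = some a := by
    simpa only [SEA.one_seq] using psum_seq_left hd.psum_eq_one hd.sharp
      (fun _ hi j hj => hd.commutes_of_mem_bicommutant hi (hd.mem_bicommutant j hj))
      fun _ hk => hd.commutes_elem hk
  have hpiece : ∀ k : ℕ, ∃ ρ, k < 2 ^ n → oplus (smul ((k : ℝ) / 2 ^ n) (d k)) ρ =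
      some (SEA.seq (d k) a) ∧ le ρ (smul ((1 / 2) ^ n) (d k)) := fun k => by
    by_cases hk : k < 2 ^ n
    · obtain ⟨ρ, hρ, hρle⟩ := exists_oplus_smul_sub (by positivity)
        (by gcongr; omega) (dyadicUnit_div hk).le_one (hd.lower k hk)
        (hd.upper k hk)
      refine ⟨ρ, fun _ => ⟨hρ, ?_⟩⟩
      convert hρle using 2
      rw [div_pow, one_pow, Nat.cast_succ]
      ring
    · exact ⟨zero, fun h => absurd h hk⟩
  choose ρ hρ using hpiece
  obtain ⟨s, r, hs, hr, hsr⟩ := exists_psum_oplus_psum ha fun k hk => (hρ k hk).1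
  obtain ⟨T, hT, hTle⟩ := exists_psum_le_psum
    (psum_smul (by positivity) (pow_le_one₀ (by norm_num) (by norm_num)) hd.psum_eq_one)
    fun k hk => (hρ k hk).2
  exact ⟨s, hs, r, hsr, Option.some.inj (hr.symm.trans hT) ▸ hTle⟩

lemma sCommuteC_of_psum {c : ℕ → ℝ} {Y : E} (hc : ∀ k < 2 ^ n, DyadicUnit (c k))
    (hY : psum (fun k => smul (c k) (d k)) (2 ^ n) = some Y) : sCommuteC a Y :=
  sCommuteC_of_commutes fun _ hp => psum_commutes (fun k hk =>
    commutes_smul_right hp.1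
      (hd.commutes_of_mem_bicommutant hk (subset_bicommutant _ hp)).symm (hc k hk)) hY

lemma splitBy_sharp_mem {v : E} (hv : v ∈ sPbicomm a) {j : ℕ} (hj : j < 2 ^ (n + 1)) :
    Sharp (splitBy d v j) ∧ splitBy d v j ∈ bicommutant (sPbicomm a) := by
  have hv' := subset_bicommutant _ hv
  have hk : j / 2 < 2 ^ n := by rw [pow_succ'] at hj; omega
  have hdv := hd.commutes_of_mem_bicommutant hk hv'
  rw [EffectAlgebra.splitBy]
  split_ifs
  · exact ⟨sharp_seq (hd.sharp _ hk) hv.1 hdv, seq_mem_commutant (hd.mem_bicommutant _ hk) hv'⟩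
  · exact ⟨sharp_seq (hd.sharp _ hk) (sharp_perp hv.1) (commutes_perp hdv),
      seq_mem_commutant (hd.mem_bicommutant _ hk) (perp_mem_commutant hv')⟩

variable {Y : E}
  (hY : psum (fun k => smul (((2 * k + 1 : ℕ) : ℝ) / 2 ^ (n + 1)) (d k)) (2 ^ n) = some Y)
include hY

lemma lower_splitBy {v : E} (hv : v ∈ sPbicomm a)
    (hvY : le (SEA.seq (perp v) Y) (SEA.seq (perp v) a)) {j : ℕ} (hj : j < 2 ^ (n + 1)) :
    le (smul ((j : ℝ) / 2 ^ (n + 1)) (splitBy d v j)) (SEA.seq (splitBy d v j) a) := by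
  have hdv := fun {k} (hk : k < 2 ^ n) =>
    hd.commutes_of_mem_bicommutant hk (subset_bicommutant _ hv)
  obtain ⟨k, rfl | rfl⟩ := Nat.even_or_odd' j
  · have hk : k < 2 ^ n := by rw [pow_succ'] at hj; omega
    have hlow := hd.lower k hk
    rw [← seq_smul_one (dyadicUnit_div hk.le)] at hlow
    rw [splitBy_two_mul, cast_two_mul_div_two_pow_succ, ← seq_smul_one (dyadicUnit_div hk.le)]
    exact seq_seq_le_seq_seq_of_left (hdv hk) hlow
  · have hk : k < 2 ^ n := by rw [pow_succ'] at hj; omega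
    rw [splitBy_two_mul_add_one, ← seq_psum_smul_of_le hd.psum_eq_one hd.sharp
      (fun _ => dyadicUnit_mid) hY hk (seq_le_left _ _)]
    exact seq_seq_le_seq_seq_of_right (commutes_perp (hdv hk)) hvY

lemma upper_splitBy {v : E} (hv : v ∈ sPbicomm a)
    (hva : le (SEA.seq v a) (SEA.seq v Y)) {j : ℕ} (hj : j < 2 ^ (n + 1)) :
    le (SEA.seq (splitBy d v j) a) (smul (((j + 1 : ℕ) : ℝ) / 2 ^ (n + 1)) (splitBy d v j)) := by
  have hdv := fun {k} (hk : k < 2 ^ n) =>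
    hd.commutes_of_mem_bicommutant hk (subset_bicommutant _ hv)
  obtain ⟨k, rfl | rfl⟩ := Nat.even_or_odd' j
  · have hk : k < 2 ^ n := by rw [pow_succ'] at hj; omega
    rw [splitBy_two_mul, ← seq_psum_smul_of_le hd.psum_eq_one hd.sharp
      (fun _ => dyadicUnit_mid) hY hk (seq_le_left _ _)]
    exact seq_seq_le_seq_seq_of_right (hdv hk) hva
  · have hk : k < 2 ^ n := by rw [pow_succ'] at hj; omega
    have hup := hd.upper k hk
    rw [← seq_smul_one (dyadicUnit_div hk)] at hup
    rw [splitBy_two_mul_add_one, cast_two_mul_add_two_div_two_pow_succ,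
      ← seq_smul_one (dyadicUnit_div hk)]
    exact seq_seq_le_seq_seq_of_left (commutes_perp (hdv hk)) hup

lemma splitBy {v : E} (hv : v ∈ sPbicomm a) (hva : le (SEA.seq v a) (SEA.seq v Y))
    (hvY : le (SEA.seq (perp v) Y) (SEA.seq (perp v) a)) :
    IsDyadicPartition a (n + 1) (splitBy d v) where
  sharp _ hj := (hd.splitBy_sharp_mem hv hj).1
  mem_bicommutant _ hj := (hd.splitBy_sharp_mem hv hj).2
  psum_eq_one := by
    rw [pow_succ']
    refine psum_two_mul hd.psum_eq_one fun k _ => ?_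
    rw [splitBy_two_mul, splitBy_two_mul_add_one]
    exact oplus_seq_seq_perp (d k) v
  lower _ hj := hd.lower_splitBy hY hv hvY hj
  upper _ hj := hd.upper_splitBy hY hv hva hj

omit hY

lemma exists_refinement (hbc : sBComparability E) :
    ∃ d', IsDyadicPartition a (n + 1) d' ∧
      ∀ s s', lowerSum d n = some s → lowerSum d' (n + 1) = some s' → le s s' := by
  obtain ⟨Y, hY, -⟩ := exists_psum_le_psum hd.psum_eq_one fun k hk =>
    smul_le_self (dyadicUnit_mid hk).nonneg (dyadicUnit_mid hk).le_one
  obtain ⟨v, hv, -, hva, hvY⟩ := hbc.2 a Y (hd.sCommuteC_of_psum (fun _ => dyadicUnit_mid) hY)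
  exact ⟨_, hd.splitBy hY hv hva hvY, fun _ _ => lowerSum_le_lowerSum_splitBy v⟩

end IsDyadicPartition

theorem exists_approximants (harch : StronglyArchimedean E) (hbc : sBComparability E) (a : E) :
    ∃ s : ℕ → E, (∀ n, le (s n) (s (n + 1))) ∧ IsSupSeq s a ∧
      ∀ n, IsDyadicCombination (bicommutant (sPbicomm a)) (s n) := by
  have hstep : ∀ n (d : ℕ → E), ∃ d', IsDyadicPartition a n d → IsDyadicPartition a (n + 1) d' ∧
      ∀ s s', lowerSum d n = some s → lowerSum d' (n + 1) = some s' → le s s' := fun n d => by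
    by_cases hd : IsDyadicPartition a n d
    · obtain ⟨d', hd'⟩ := hd.exists_refinement hbc
      exact ⟨d', fun _ => hd'⟩
    · exact ⟨d, fun h => absurd h hd⟩
  choose next hnext using hstep
  let D : ℕ → ℕ → E := fun n => Nat.rec (fun _ => one) next n
  have hD : ∀ n, IsDyadicPartition a n (D n) := fun n => by
    induction n with
    | zero => exact isDyadicPartition_zero a
    | succ n ih => exact (hnext n (D n) ih).1
  choose s hs r hr using fun n => (hD n).exists_lowerSum_oplus
  refine ⟨s, fun n => (hnext n (D n) (hD n)).2 _ _ (hs n) (hs (n + 1)),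
    isSupSeq_of_approx harch fun n => ⟨r n, hr n⟩, fun n => ⟨2 ^ n, _, D n, fun k hk =>
      ⟨dyadicUnit_div hk.le, (hD n).sharp k hk, (hD n).mem_bicommutant k hk⟩, hs n⟩⟩

end Partition

end EffectAlgebra

open EffectAlgebra in
/-- in a strongly archimedean convex SEA with property A having the
b-comparability property, `aCb` implies `a|b`. -/
theorem stmt10 {E : Type u} [EffectAlgebra E] [SEA E] [ConvexEA E]
    (harch : StronglyArchimedean E) (hA : PropertyA E)
    (hbc : sBComparability E) :
    ∀ a b : E, sCommuteC a b → Commutes a b := by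
  intro a b hab
  have hPab : ∀ p ∈ sPbicomm a, ∀ q ∈ sPbicomm b, Commutes p q :=
    fun p hp q hq => commutes_of_mcompat hp.1 (hab p hp q hq)
  obtain ⟨s, hs_mono, hs_sup, hs⟩ := exists_approximants harch hbc a
  obtain ⟨t, ht_mono, ht_sup, ht⟩ := exists_approximants harch hbc b
  have hss : ∀ i j, Commutes (s i) (s j) := fun i j => (hs i).commutes (sPbicomm_commutes a) (hs j)
  have htt : ∀ i j, Commutes (t i) (t j) := fun i j => (ht i).commutes (sPbicomm_commutes b) (ht j)
  have hsb : ∀ n, Commutes (s n) b := fun n =>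
    (hA t b (s n) ht_mono htt ht_sup fun m => ((hs n).commutes hPab (ht m)).symm).symm
  exact hA s a b hs_mono hss hs_sup hsb
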